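/- arXiv:1212.4999 — 2 statements merged into one kernel-verified Lean document; each statement's English description precedes it below -/
import Mathlib

section
/- Let B be the c × r incidence matrix of a directed graph and K = diag(κ₁,…,κ_r) with all κⱼ > 0. For γ ∈ ℝ^c, γᵀ B K Bᵀ Exp(γ) = 0 if and only if Bᵀ γ = 0. -/
/-!
Writing `d = Bᵀ γ`, the form is `∑ⱼ κⱼ (γ_{Sⱼ} - γ_{Pⱼ}) (exp γ_{Sⱼ} - exp γ_{Pⱼ})`. Since `exp` is
strictly increasing, every summand is nonnegative and vanishes exactly when `γ_{Sⱼ} = γ_{Pⱼ}`,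
i.e. when `dⱼ = 0`.
-/

open Matrix

theorem transpose_mulVec_of_incidence {R m n : Type*} [Ring R] [Fintype m] [DecidableEq m]
    {S P : n → m} (hSP : ∀ j, S j ≠ P j)
    {B : Matrix m n R} (hB : ∀ i j, B i j = if i = S j then 1 else if i = P j then -1 else 0)
    (x : m → R) (j : n) :
    (Bᵀ *ᵥ x) j = x (S j) - x (P j) := by
  have hcol : (fun i => B i j) = Pi.single (S j) 1 - Pi.single (P j) 1 := by
    ext i
    rw [hB]
    by_cases hS : i = S j
    · subst hS
      simp [hSP j]
    · by_cases hP : i = P j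
      · subst hP
        simp [hS]
      · simp [hS, hP]
  calc (Bᵀ *ᵥ x) j = (fun i => B i j) ⬝ᵥ x := rfl
    _ = x (S j) - x (P j) := by
      rw [hcol, sub_dotProduct, single_one_dotProduct, single_one_dotProduct]

theorem dotProduct_mul_diagonal_mul_transpose_mulVec {R m n : Type*} [CommRing R]
    [Fintype m] [Fintype n] [DecidableEq n] (B : Matrix m n R) (κ : n → R) (x y : m → R) :
    x ⬝ᵥ (B * diagonal κ * Bᵀ) *ᵥ y = ∑ j, κ j * (Bᵀ *ᵥ x) j * (Bᵀ *ᵥ y) j := by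
  rw [← mulVec_mulVec, ← mulVec_mulVec, dotProduct_mulVec, ← mulVec_transpose]
  simp only [dotProduct, mulVec_diagonal]
  exact Finset.sum_congr rfl fun j _ => by ring

theorem StrictMono.sub_mul_sub_pos {f : ℝ → ℝ} (hf : StrictMono f) {a b : ℝ} (hab : a ≠ b) :
    0 < (a - b) * (f a - f b) := by
  rcases hab.lt_or_gt with h | h
  · exact mul_pos_of_neg_of_neg (sub_neg.2 h) (sub_neg.2 (hf h))
  · exact mul_pos (sub_pos.2 h) (sub_pos.2 (hf h))

theorem StrictMono.sub_mul_sub_nonneg {f : ℝ → ℝ} (hf : StrictMono f) (a b : ℝ) :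
    0 ≤ (a - b) * (f a - f b) := by
  rcases eq_or_ne a b with rfl | hab
  · simp
  · exact (hf.sub_mul_sub_pos hab).le

theorem StrictMono.sum_mul_sub_mul_sub_eq_zero_iff {ι : Type*} [Fintype ι] {f : ℝ → ℝ}
    (hf : StrictMono f) {κ : ι → ℝ} (hκ : ∀ j, 0 < κ j) (a b : ι → ℝ) :
    ∑ j, κ j * (a j - b j) * (f (a j) - f (b j)) = 0 ↔ ∀ j, a j = b j := by
  have hnonneg : ∀ j ∈ Finset.univ, 0 ≤ κ j * (a j - b j) * (f (a j) - f (b j)) := by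
    intro j _
    rw [mul_assoc]
    exact mul_nonneg (hκ j).le (hf.sub_mul_sub_nonneg _ _)
  rw [Finset.sum_eq_zero_iff_of_nonneg hnonneg]
  refine forall_congr' fun j => ⟨fun h => ?_, fun h => by simp [h]⟩
  by_contra hab
  have hpos := mul_pos (hκ j) (hf.sub_mul_sub_pos hab)
  rw [← mul_assoc] at hpos
  exact hpos.ne' (h (Finset.mem_univ j))

open Matrix in
theorem laplacian_exp_dissipation_eq_zero_iff (c r : ℕ) (S P : Fin r → Fin c)
    (hSP : ∀ j, S j ≠ P j)
    (B : Matrix (Fin c) (Fin r) ℝ)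
    (hB : ∀ i j, B i j = if i = S j then 1 else if i = P j then -1 else 0)
    (κ : Fin r → ℝ) (hκ : ∀ j, 0 < κ j)
    (γ : Fin c → ℝ) :
    γ ⬝ᵥ (B * Matrix.diagonal κ * Bᵀ) *ᵥ (fun i => Real.exp (γ i)) = 0 ↔
      Bᵀ *ᵥ γ = 0 := by
  have hBT := transpose_mulVec_of_incidence hSP hB
  rw [dotProduct_mul_diagonal_mul_transpose_mulVec]
  simp only [hBT]
  rw [Real.exp_strictMono.sum_mul_sub_mul_sub_eq_zero_iff hκ, funext_iff]
  simp only [hBT, Pi.zero_apply, sub_eq_zero]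
end

section
/- In the compartmental balanced reaction-diffusion model Ẋ = −(W⁻¹ ⊗ I_m) Δ_d (X/X*) + F(X), with Δ_d = (d ⊗ I_m)ᵀ H R (d ⊗ I_m) (H, R diagonal positive definite, d the incidence matrix of a connected primal mesh graph), F(X) the stacked balanced mass-action vector fields f(xʲ) = −Z B K Bᵀ Exp(Zᵀ Ln(xʲ/x*)), and W = diag(wⱼ) ⊗ I_m the positive compartment-volume weights, the Lyapunov derivative satisfies Ġ_d(X) = ∇G_d(X)ᵀ Ẋ ≤ 0 for all X ∈ ℝ₊^{mN}, where G_d(X) = Σⱼ wⱼ G(xʲ). -/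
/-!
Both parts of the vector field are weighted Laplacian forms `Aᵀ * diagonal D * A` with `D ≥ 0`
and `A` the incidence matrix of a graph: diffusion uses `d ⊗ I_m`, the reactions use `Bᵀ` after
moving `Z` across the dot product. Such a form is `∑ₑ Dₑ (xₛ - xₜ)(yₛ - yₜ)`, which is
nonnegative whenever `x` and `y` vary in the same direction. This is the case for
`Ln(X/X*)` against `X/X*` and for `Zᵀ Ln(x/x*)` against its exponential, so both
contributions to `∇G_dᵀ Ẋ` are nonpositive (the weights `wⱼ` of `∇G_d` cancel `W⁻¹` in
the diffusion term).
-/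

open Matrix
open scoped Kronecker

namespace Matrix

variable {E V R : Type*}

def IsIncidence [Zero R] [One R] [Neg R] [DecidableEq V] (A : Matrix E V R) (src tgt : E → V) :
    Prop :=
  ∀ e v, A e v = if v = src e then 1 else if v = tgt e then -1 else 0

namespace IsIncidence

variable [DecidableEq V] {A : Matrix E V R} {src tgt : E → V}

theorem row_eq [Ring R] (hA : A.IsIncidence src tgt) {e : E} (he : src e ≠ tgt e) :
    A e = Pi.single (src e) 1 - Pi.single (tgt e) 1 := by
  ext v
  rw [hA]
  by_cases hs : v = src e
  · subst hs; simp [he]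
  · by_cases ht : v = tgt e
    · subst ht; simp [hs]
    · simp [hs, ht]

theorem mulVec_apply [Fintype V] [Ring R] (hA : A.IsIncidence src tgt) {e : E}
    (he : src e ≠ tgt e) (x : V → R) : (A *ᵥ x) e = x (src e) - x (tgt e) := by
  rw [mulVec, hA.row_eq he, sub_dotProduct, single_one_dotProduct, single_one_dotProduct]

theorem mulVec_mul_mulVec_nonneg [Fintype V] [Ring R] [LinearOrder R] [IsStrictOrderedRing R]
    (hA : A.IsIncidence src tgt) {e : E} (he : src e ≠ tgt e) {x y : V → R}
    (hxy : Monovary x y) : 0 ≤ (A *ᵥ x) e * (A *ᵥ y) e := by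
  rw [hA.mulVec_apply he, hA.mulVec_apply he]
  exact hxy.sub_mul_sub_nonneg (tgt e) (src e)

theorem kronecker_one {n : Type*} [DecidableEq n] [Ring R] (hA : A.IsIncidence src tgt) :
    (A ⊗ₖ (1 : Matrix n n R)).IsIncidence (fun p => (src p.1, p.2))
      (fun p => (tgt p.1, p.2)) := by
  rintro ⟨e, i⟩ ⟨v, j⟩
  rw [kronecker_apply, one_apply, hA]
  by_cases hij : i = j
  · subst hij; simp
  · simp [hij, Ne.symm hij]

end IsIncidence

theorem dotProduct_transpose_mul_diagonal_mul_mulVec [Fintype E] [Fintype V] [DecidableEq E]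
    [CommSemiring R] (A : Matrix E V R) (D : E → R) (x y : V → R) :
    x ⬝ᵥ (Aᵀ * diagonal D * A) *ᵥ y = ∑ e, D e * ((A *ᵥ x) e * (A *ᵥ y) e) := by
  rw [← mulVec_mulVec, ← mulVec_mulVec, dotProduct_mulVec, vecMul_transpose, dotProduct]
  simp only [mulVec_diagonal]
  exact Finset.sum_congr rfl fun e _ => by ring

theorem IsIncidence.dotProduct_transpose_mul_diagonal_mul_mulVec_nonneg [Fintype E] [Fintype V]
    [DecidableEq E] [DecidableEq V] [CommRing R] [LinearOrder R] [IsStrictOrderedRing R]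
    {A : Matrix E V R} {src tgt : E → V} (hA : A.IsIncidence src tgt)
    (hloop : ∀ e, src e ≠ tgt e) {D : E → R} (hD : ∀ e, 0 ≤ D e)
    {x y : V → R} (hxy : Monovary x y) : 0 ≤ x ⬝ᵥ (Aᵀ * diagonal D * A) *ᵥ y := by
  rw [dotProduct_transpose_mul_diagonal_mul_mulVec]
  exact Finset.sum_nonneg fun e _ =>
    mul_nonneg (hD e) (hA.mulVec_mul_mulVec_nonneg (hloop e) hxy)

end Matrix

theorem dotProduct_massAction_nonneg {S C E : Type*} [Fintype S] [Fintype C] [Fintype E]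
    [DecidableEq C] [DecidableEq E] {Z : Matrix S C ℝ} {B : Matrix C E ℝ} {src tgt : E → C}
    (hB : Bᵀ.IsIncidence src tgt) (hloop : ∀ e, src e ≠ tgt e) {κ : E → ℝ}
    (hκ : ∀ e, 0 ≤ κ e) (y : S → ℝ) :
    0 ≤ y ⬝ᵥ (Z * B * diagonal κ * Bᵀ) *ᵥ fun ρ => Real.exp ((Zᵀ *ᵥ y) ρ) := by
  rw [show Z * B * diagonal κ * Bᵀ = Z * (Bᵀᵀ * diagonal κ * Bᵀ) by
      simp only [transpose_transpose, Matrix.mul_assoc],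
    ← mulVec_mulVec, dotProduct_mulVec, ← mulVec_transpose]
  exact hB.dotProduct_transpose_mul_diagonal_mul_mulVec_nonneg hloop hκ
    fun i j hij => (Real.exp_lt_exp.1 hij).le

open Matrix in
theorem compartmental_lyapunov_derivative_nonpos
    (m c r N Ne : ℕ)
    -- complex graph
    (Sc P : Fin r → Fin c) (hSP : ∀ j, Sc j ≠ P j)
    (B : Matrix (Fin c) (Fin r) ℝ)
    (hB : ∀ i j, B i j = if i = Sc j then 1 else if i = P j then -1 else 0)
    (κ : Fin r → ℝ) (hκ : ∀ j, 0 < κ j)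
    (Z : Matrix (Fin m) (Fin c) ℝ)
    (xs : Fin m → ℝ) (hxs : ∀ i, 0 < xs i)
    -- mesh graph
    (head tail : Fin Ne → Fin N) (hht : ∀ e, head e ≠ tail e)
    (d : Matrix (Fin Ne) (Fin N) ℝ)
    (hd : ∀ e v, d e v = if v = head e then 1 else if v = tail e then -1 else 0)
    -- Kronecker product d ⊗ I_m
    (dI : Matrix (Fin Ne × Fin m) (Fin N × Fin m) ℝ)
    (hdI : ∀ p q, dI p q = if p.2 = q.2 then d p.1 q.1 else 0)
    -- positive diagonal Hodge and diffusion matrices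
    (h R : Fin Ne × Fin m → ℝ) (hh : ∀ e, 0 < h e) (hR : ∀ e, 0 < R e)
    (Δd : Matrix (Fin N × Fin m) (Fin N × Fin m) ℝ)
    (hΔ : Δd = dIᵀ * Matrix.diagonal h * Matrix.diagonal R * dI)
    -- compartment volumes
    (w : Fin N → ℝ) (hw : ∀ j, 0 < w j)
    -- state
    (X : Fin N → Fin m → ℝ) (hX : ∀ j i, 0 < X j i)
    -- reaction vector field
    (f : (Fin m → ℝ) → (Fin m → ℝ))
    (hf : ∀ x, f x = -((Z * B * Matrix.diagonal κ * Bᵀ) *ᵥ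
      fun ρ => Real.exp ((Zᵀ *ᵥ fun i => Real.log (x i / xs i)) ρ)))
    -- time derivative of the state
    (Xdot : Fin N × Fin m → ℝ)
    (hXdot : ∀ p, Xdot p =
      -(1 / w p.1) * ((Δd *ᵥ fun q => X q.1 q.2 / xs q.2) p) + f (X p.1) p.2)
    -- gradient of the total Gibbs free energy
    (gradGd : Fin N × Fin m → ℝ)
    (hgrad : ∀ p, gradGd p = w p.1 * Real.log (X p.1 p.2 / xs p.2)) :
    gradGd ⬝ᵥ Xdot ≤ 0 := by
  set v : Fin N × Fin m → ℝ := fun q => X q.1 q.2 / xs q.2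
  have hv : ∀ q, 0 < v q := fun q => div_pos (hX _ _) (hxs _)
  have hdI_kron : dI = d ⊗ₖ 1 := by
    ext p q
    rw [hdI, kronecker_apply, one_apply, mul_ite, mul_one, mul_zero]
  have hdiff : 0 ≤ (fun q => Real.log (v q)) ⬝ᵥ Δd *ᵥ v := by
    rw [hΔ, Matrix.mul_assoc dIᵀ, diagonal_mul_diagonal, hdI_kron]
    exact (IsIncidence.kronecker_one hd).dotProduct_transpose_mul_diagonal_mul_mulVec_nonneg
      (fun e hloop => hht e.1 (congrArg Prod.fst hloop)) (fun e => (mul_pos (hh e) (hR e)).le)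
      fun p q hpq => Real.log_le_log (hv p) hpq.le
  have hreact : ∀ j, 0 ≤ (fun i => Real.log (X j i / xs i)) ⬝ᵥ -f (X j) := by
    intro j
    rw [hf, neg_neg]
    exact dotProduct_massAction_nonneg (fun ρ i => hB i ρ) hSP (fun ρ => (hκ ρ).le) _
  have hsplit : gradGd ⬝ᵥ Xdot = -((fun q => Real.log (v q)) ⬝ᵥ Δd *ᵥ v)
      - ∑ j, w j * ((fun i => Real.log (X j i / xs i)) ⬝ᵥ -f (X j)) := by
    simp only [dotProduct, hgrad, hXdot, mul_add, Finset.sum_add_distrib,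
      Fintype.sum_prod_type, Finset.mul_sum, ← Finset.sum_neg_distrib, sub_eq_add_neg]
    congr 1 <;> refine Finset.sum_congr rfl fun j _ => Finset.sum_congr rfl fun i _ => ?_
    · field_simp [(hw j).ne']
      exact congrArg Neg.neg (mul_comm _ _)
    · simp only [Pi.neg_apply]
      ring
  rw [hsplit]
  have hreact_sum := Finset.sum_nonneg fun j (_ : j ∈ Finset.univ) =>
    mul_nonneg (hw j).le (hreact j)
  linarith
end
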